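/- Let 0 < ν < √2 and let A be the soliton on finite background. Then there exists τ ∈ ℝ with A(0,τ) = 0 if and only if ν ≤ √(3/2). Equivalently, the condition |2(1−ν²)/√(4−2ν²)| ≤ 1 holds precisely when ν² ≤ 3/2. Thus the SFB wave field has singular points (vanishing amplitude) exactly for modulation frequencies 0 < ν ≤ √(3/2). -/

import Mathlib

open Real Filter Topology

/-- Benjamin–Feir growth rate `σ = ν√(2−ν²)`. -/
noncomputable def sfbSigma (ν : ℝ) : ℝ := ν * Real.sqrt (2 - ν ^ 2)

/-- Displaced amplitude `G(ξ,τ) = P(ξ)/(Q(ξ) − σ cos(ντ))` of the SFB, with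
`P(ξ) = ν√2·√(2ν²cosh²(σξ) − σ²)` and `Q(ξ) = ν√2·cosh(σξ)`. -/
noncomputable def sfbG (ν ξ τ : ℝ) : ℝ :=
  (ν * Real.sqrt 2 * Real.sqrt (2 * ν ^ 2 * Real.cosh (sfbSigma ν * ξ) ^ 2 - sfbSigma ν ^ 2)) /
  (ν * Real.sqrt 2 * Real.cosh (sfbSigma ν * ξ) - sfbSigma ν * Real.cos (ν * τ))

/-- SFB phase `φ(ξ) = arctan(−(σ/ν²) tanh(σξ))`. -/
noncomputable def sfbPhi (ν ξ : ℝ) : ℝ :=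
  Real.arctan (-(sfbSigma ν / ν ^ 2) * Real.tanh (sfbSigma ν * ξ))

/-- The soliton on finite background: `A(ξ,τ) = e^{−iξ}(G(ξ,τ)e^{iφ(ξ)} − 1)`. -/
noncomputable def sfbA (ν ξ τ : ℝ) : ℂ :=
  Complex.exp (-Complex.I * (ξ : ℂ)) *
    ((sfbG ν ξ τ : ℂ) * Complex.exp (Complex.I * (sfbPhi ν ξ : ℂ)) - 1)

/-!
At `ξ = 0` the phase vanishes and `P(0) = √2 ν³`, `Q(0) = √2 ν`, so `A(0,τ) = G(0,τ) − 1`,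
and `G(0,τ) = 1` exactly when `cos(ντ) = 2(1−ν²)/√(4−2ν²)`. Such a `τ` exists iff this value
lies in `[−1, 1]`, i.e. iff `4(1−ν²)² ≤ 4 − 2ν²`, i.e. iff `ν²(2ν² − 3) ≤ 0`.
-/

lemma div_eq_one_iff_eq_of_left_ne_zero {G : Type*} [GroupWithZero G] {a b : G} (ha : a ≠ 0) :
    a / b = 1 ↔ a = b := by
  rcases eq_or_ne b 0 with rfl | hb
  · simp [ha]
  · exact div_eq_one_iff_eq hb

noncomputable def sfbCritCos (ν : ℝ) : ℝ := 2 * (1 - ν ^ 2) / √(4 - 2 * ν ^ 2)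

lemma sfbPhi_zero_right (ν : ℝ) : sfbPhi ν 0 = 0 := by
  simp [sfbPhi]

lemma sfbA_zero_left (ν τ : ℝ) : sfbA ν 0 τ = (sfbG ν 0 τ : ℂ) - 1 := by
  simp [sfbA, sfbPhi_zero_right]

lemma sfbSigma_sq {ν : ℝ} (hν : ν ^ 2 ≤ 2) : sfbSigma ν ^ 2 = ν ^ 2 * (2 - ν ^ 2) := by
  rw [sfbSigma, mul_pow, sq_sqrt (by linarith)]

lemma sfbG_zero_left {ν : ℝ} (hν : ν ^ 2 ≤ 2) (τ : ℝ) :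
    sfbG ν 0 τ = ν * √2 * ν ^ 2 / (ν * √2 - sfbSigma ν * cos (ν * τ)) := by
  have hP : 2 * ν ^ 2 * cosh (sfbSigma ν * 0) ^ 2 - sfbSigma ν ^ 2 = (ν ^ 2) ^ 2 := by
    rw [mul_zero, cosh_zero, sfbSigma_sq hν]
    ring
  rw [sfbG, hP, sqrt_sq (sq_nonneg ν), mul_zero, cosh_zero, mul_one]

lemma sfbSigma_mul_sfbCritCos {ν : ℝ} (hν : ν ^ 2 < 2) :
    sfbSigma ν * sfbCritCos ν = ν * √2 * (1 - ν ^ 2) := by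
  have h4 : (4 : ℝ) - 2 * ν ^ 2 = 2 * (2 - ν ^ 2) := by ring
  have hs : √(2 - ν ^ 2) ≠ 0 := (sqrt_pos.mpr (by linarith)).ne'
  rw [sfbSigma, sfbCritCos, h4, sqrt_mul zero_le_two]
  field_simp
  rw [sq_sqrt zero_le_two]
  ring

lemma sfbA_zero_left_eq_zero_iff {ν : ℝ} (hν0 : 0 < ν) (hν2 : ν ^ 2 < 2) (τ : ℝ) :
    sfbA ν 0 τ = 0 ↔ cos (ν * τ) = sfbCritCos ν := by
  have hσ : 0 < sfbSigma ν := mul_pos hν0 (sqrt_pos.mpr (by linarith))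
  have hN : ν * √2 * ν ^ 2 ≠ 0 := by positivity
  rw [sfbA_zero_left, sub_eq_zero, ← Complex.ofReal_one, Complex.ofReal_inj,
    sfbG_zero_left hν2.le]
  calc ν * √2 * ν ^ 2 / (ν * √2 - sfbSigma ν * cos (ν * τ)) = 1
        ↔ ν * √2 * ν ^ 2 = ν * √2 - sfbSigma ν * cos (ν * τ) :=
          div_eq_one_iff_eq_of_left_ne_zero hN
    _ ↔ sfbSigma ν * cos (ν * τ) = sfbSigma ν * sfbCritCos ν := by
          rw [sfbSigma_mul_sfbCritCos hν2]
          constructor <;> intro h <;> linarith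
    _ ↔ cos (ν * τ) = sfbCritCos ν := mul_right_inj' hσ.ne'

lemma exists_cos_mul_eq_iff {ν : ℝ} (hν : ν ≠ 0) (c : ℝ) :
    (∃ τ, cos (ν * τ) = c) ↔ |c| ≤ 1 := by
  rw [abs_le, ← Set.mem_Icc, ← range_cos]
  exact ⟨fun ⟨τ, h⟩ => ⟨ν * τ, h⟩, fun ⟨x, h⟩ => ⟨x / ν, by rwa [mul_div_cancel₀ x hν]⟩⟩

lemma abs_sfbCritCos_le_one_iff {ν : ℝ} (hν : ν ^ 2 < 2) :
    |sfbCritCos ν| ≤ 1 ↔ ν ^ 2 ≤ 3 / 2 := by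
  rw [← sq_le_one_iff_abs_le_one, sfbCritCos, div_pow, sq_sqrt (by linarith),
    div_le_one (by linarith)]
  constructor <;> intro h <;> nlinarith [sq_nonneg ν]

/-- For `0 < ν < √2`, the SFB has singular points (some `τ` with
`A(0,τ) = 0`) if and only if `ν ≤ √(3/2)`; equivalently,
`|2(1−ν²)/√(4−2ν²)| ≤ 1` holds precisely when `ν² ≤ 3/2`. -/
theorem sfb_singular_points_exist_iff
    (ν : ℝ) (hν0 : 0 < ν) (hν2 : ν < Real.sqrt 2) :
    ((∃ τ : ℝ, sfbA ν 0 τ = 0) ↔ ν ≤ Real.sqrt (3 / 2)) ∧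
    (|2 * (1 - ν ^ 2) / Real.sqrt (4 - 2 * ν ^ 2)| ≤ 1 ↔ ν ^ 2 ≤ 3 / 2) := by
  have hν2' : ν ^ 2 < 2 := by
    simpa using (lt_sqrt hν0.le).mp hν2
  refine ⟨?_, abs_sfbCritCos_le_one_iff hν2'⟩
  simp_rw [sfbA_zero_left_eq_zero_iff hν0 hν2']
  rw [exists_cos_mul_eq_iff hν0.ne', abs_sfbCritCos_le_one_iff hν2', le_sqrt' hν0]
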